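/- Let f ∈ H and let p_1, …, p_n ∈ E be points whose Gram matrix A_n is positive definite. Then the Aveiro approximation f*_{A_n} satisfies the interpolation property ⟨f*_{A_n}, h(p_j)⟩ = ⟨f, h(p_j)⟩ for every j = 1, …, n; moreover, if g ∈ H satisfies ⟨g, h(p_j)⟩ = ⟨f, h(p_j)⟩ for all j = 1, …, n, then ‖f*_{A_n}‖ ≤ ‖g‖. -/

import Mathlib

open scoped ComplexInnerProductSpace ComplexOrder

/-!
The Gram matrix `G` of `x₁, …, xₙ` is Hermitian, so `conj (G⁻¹ j k) = G⁻¹ k j` and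
`⟪x i, f*⟫ = ∑ⱼ ⟪x j, f⟫ (G G⁻¹) i j = ⟪x i, f⟫`. Hence, for any `g` with the same inner products,
`g - f*` is orthogonal to every `x k`, so to `f* ∈ span x`, and Pythagoras gives
`‖g‖² = ‖f*‖² + ‖g - f*‖²`.
-/

open Matrix
open scoped InnerProductSpace

section

variable {𝕜 H ι : Type*} [RCLike 𝕜] [NormedAddCommGroup H] [InnerProductSpace 𝕜 H]

theorem norm_le_norm_of_inner_sub_eq_zero {u v : H} (huv : ⟪u, v - u⟫_𝕜 = 0) : ‖u‖ ≤ ‖v‖ := by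
  have pythagoras := norm_add_sq_eq_norm_sq_add_norm_sq_of_inner_eq_zero u (v - u) huv
  rw [add_sub_cancel] at pythagoras
  refine (mul_self_le_mul_self_iff (norm_nonneg u) (norm_nonneg v)).mpr ?_
  rw [pythagoras]
  exact le_add_of_nonneg_right (mul_self_nonneg _)

variable [Fintype ι] [DecidableEq ι]

variable (𝕜) in
noncomputable def aveiroApprox (x : ι → H) (f : H) : H :=
  ∑ j, ∑ k, (⟪x j, f⟫_𝕜 * starRingEnd 𝕜 ((gram 𝕜 x)⁻¹ j k)) • x k

theorem inner_aveiroApprox {x : ι → H} (hx : IsUnit (gram 𝕜 x)) (f : H) (i : ι) :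
    ⟪x i, aveiroApprox 𝕜 x f⟫_𝕜 = ⟪x i, f⟫_𝕜 := by
  have conj_inv (j k : ι) : starRingEnd 𝕜 ((gram 𝕜 x)⁻¹ j k) = (gram 𝕜 x)⁻¹ k j := by
    simpa using congrFun₂ (isHermitian_gram 𝕜 x).inv k j
  have mul_inv : gram 𝕜 x * (gram 𝕜 x)⁻¹ = 1 :=
    mul_nonsing_inv _ ((isUnit_iff_isUnit_det _).mp hx)
  calc ⟪x i, aveiroApprox 𝕜 x f⟫_𝕜
      = ∑ j, ⟪x j, f⟫_𝕜 * (gram 𝕜 x * (gram 𝕜 x)⁻¹) i j := by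
        simp only [aveiroApprox, inner_sum, inner_smul_right, mul_apply, Finset.mul_sum,
          conj_inv, gram_apply]
        exact Finset.sum_congr rfl fun j _ => Finset.sum_congr rfl fun k _ => by ring
    _ = ⟪x i, f⟫_𝕜 := by simp [mul_inv, one_apply]

theorem inner_aveiroApprox_eq_zero {x : ι → H} {v : H} (hv : ∀ k, ⟪x k, v⟫_𝕜 = 0) (f : H) :
    ⟪aveiroApprox 𝕜 x f, v⟫_𝕜 = 0 := by
  simp [aveiroApprox, sum_inner, inner_smul_left, hv]

theorem norm_aveiroApprox_le {x : ι → H} (hx : IsUnit (gram 𝕜 x)) {f g : H}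
    (hg : ∀ k, ⟪x k, g⟫_𝕜 = ⟪x k, f⟫_𝕜) : ‖aveiroApprox 𝕜 x f‖ ≤ ‖g‖ :=
  norm_le_norm_of_inner_sub_eq_zero (𝕜 := 𝕜) <| inner_aveiroApprox_eq_zero
    (fun k => by rw [inner_sub_right, hg, inner_aveiroApprox hx, sub_self]) f

end

theorem stmt0 {H : Type*} [NormedAddCommGroup H] [InnerProductSpace ℂ H]
    {E : Type*} (h : E → H) (n : ℕ) (p : Fin n → E) (f : H)
    (A : Matrix (Fin n) (Fin n) ℂ)
    (hA : ∀ j k, A j k = ⟪h (p j), h (p k)⟫)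
    (hpos : A.PosDef) :
    (∀ j : Fin n,
      ⟪h (p j), ∑ j' : Fin n, ∑ k : Fin n,
          (⟪h (p j'), f⟫ * (starRingEnd ℂ) (A⁻¹ j' k)) • h (p k)⟫ = ⟪h (p j), f⟫) ∧
    (∀ g : H, (∀ j : Fin n, ⟪h (p j), g⟫ = ⟪h (p j), f⟫) →
      ‖∑ j' : Fin n, ∑ k : Fin n,
          (⟪h (p j'), f⟫ * (starRingEnd ℂ) (A⁻¹ j' k)) • h (p k)‖ ≤ ‖g‖) := by
  obtain rfl : A = gram ℂ (h ∘ p) := Matrix.ext hA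
  exact ⟨inner_aveiroApprox hpos.isUnit f, fun g hg => norm_aveiroApprox_le hpos.isUnit hg⟩
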